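/- arXiv:1806.05846 — 3 statements merged into one kernel-verified Lean document; each statement's English description precedes it below -/
import Mathlib

section
/- Let f : [0,∞) → [0,∞) be measurable, K ≥ 0, α ∈ (0,1), and suppose f(t) ≤ f(0) + K ∫₀ᵗ f(s)^{1-α} ds for all t ≥ 0. Then f(t) ≤ (f(0)^α + α K t)^{1/α} for all t ≥ 0. -/
/-!
For `c > f 0` let `φ t = (c ^ α + α K t) ^ (1 / α)`, the solution of `φ' = K φ ^ (1 - α)`,
`φ 0 = c`. The right-hand side `F t = f 0 + K ∫₀ᵗ f ^ (1 - α)` stays strictly below `φ`: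
at the first time `m` with `φ m ≤ F m` we have `f ≤ F < φ` on `[0, m)`, so monotonicity of
`x ↦ x ^ (1 - α)` gives `F m ≤ φ m - (c - f 0) < φ m`. Hence `f t < φ t`, and letting `c ↓ f 0`
gives the bound.
-/

open Real MeasureTheory intervalIntegral Set Filter Topology

theorem lt_of_le_add_integral_of_eq_add_integral {G u φ : ℝ → ℝ} {a K T : ℝ} (hK : 0 ≤ K)
    (hT : 0 ≤ T) (hG : MonotoneOn G (Ici 0)) (hu₀ : ∀ t ∈ Icc 0 T, 0 ≤ u t)
    (hGu : IntervalIntegrable (fun s => G (u s)) volume 0 T)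
    (hGφ : IntervalIntegrable (fun s => G (φ s)) volume 0 T)
    (hφ : ContinuousOn φ (Icc 0 T)) (ha : a < φ 0)
    (hφ_eq : ∀ t ∈ Icc 0 T, φ t = φ 0 + K * ∫ s in 0..t, G (φ s))
    (hu : ∀ t ∈ Icc 0 T, u t ≤ a + K * ∫ s in 0..t, G (u s)) :
    u T < φ T := by
  set F := fun t => a + K * ∫ s in 0..t, G (u s)
  have hF : ContinuousOn F (Icc 0 T) := by
    have := continuousOn_primitive_interval' hGu left_mem_uIcc
    rw [uIcc_of_le hT] at this
    exact continuousOn_const.add (continuousOn_const.mul this)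
  suffices ∀ t ∈ Icc 0 T, F t < φ t from
    (hu T ⟨hT, le_rfl⟩).trans_lt (this T ⟨hT, le_rfl⟩)
  by_contra! ⟨t, ht, hφF⟩
  set S := {s ∈ Icc 0 T | φ s ≤ F s}
  have hS_bdd : BddBelow S := ⟨0, fun s hs => hs.1.1⟩
  obtain ⟨⟨hm₀, hmT⟩, hm⟩ : sInf S ∈ S :=
    (isClosed_Icc.isClosed_le hφ hF).csInf_mem ⟨t, ht, hφF⟩ hS_bdd
  set m := sInf S
  have hG_le : ∀ s ∈ Ioo 0 m, G (u s) ≤ G (φ s) := by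
    intro s ⟨hs₀, hsm⟩
    have hs : s ∈ Icc 0 T := ⟨hs₀.le, hsm.le.trans hmT⟩
    have hFφ : F s < φ s := by
      by_contra! h
      exact notMem_of_lt_csInf hsm hS_bdd ⟨hs, h⟩
    have hus : u s ≤ F s := hu s hs
    exact hG (hu₀ s hs) (show 0 ≤ φ s by linarith [hu₀ s hs]) (hus.trans hFφ.le)
  have hsub : uIcc 0 m ⊆ uIcc 0 T :=
    uIcc_subset_uIcc left_mem_uIcc (by rw [uIcc_of_le hT]; exact ⟨hm₀, hmT⟩)
  have : F m ≤ a + K * ∫ s in 0..m, G (φ s) := by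
    simp only [F]
    gcongr
    exact integral_mono_on_of_le_Ioo hm₀ (hGu.mono_set hsub) (hGφ.mono_set hsub) hG_le
  linarith [hφ_eq m ⟨hm₀, hmT⟩]

noncomputable def bihariSolution (c K α t : ℝ) : ℝ := (c ^ α + α * K * t) ^ (1 / α)

section bihariSolution

variable {c K α t : ℝ}

theorem bihariSolution_zero (hc : 0 ≤ c) (hα : α ≠ 0) : bihariSolution c K α 0 = c := by
  rw [bihariSolution, mul_zero, add_zero, ← rpow_mul hc, mul_one_div_cancel hα, rpow_one]

theorem bihariSolution_base_pos (hc : 0 < c) (hK : 0 ≤ K) (hα : 0 < α) (ht : 0 ≤ t) :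
    0 < c ^ α + α * K * t := by
  have := rpow_pos_of_pos hc α
  positivity

theorem hasDerivAt_bihariSolution (hα : α ≠ 0) (ht : 0 < c ^ α + α * K * t) :
    HasDerivAt (bihariSolution c K α) (K * bihariSolution c K α t ^ (1 - α)) t := by
  refine (((hasDerivAt_id t).const_mul (α * K)).const_add (c ^ α)).rpow_const
    (p := 1 / α) (Or.inl ht.ne') |>.congr_deriv ?_
  rw [bihariSolution, id, ← rpow_mul ht.le, one_div_mul_eq_div, sub_div, div_self hα]
  field_simp

theorem continuousOn_bihariSolution (hc : 0 < c) (hK : 0 ≤ K) (hα : 0 < α) :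
    ContinuousOn (bihariSolution c K α) (Ici 0) := fun _ hs =>
  (hasDerivAt_bihariSolution hα.ne' (bihariSolution_base_pos hc hK hα hs)).continuousAt
    |>.continuousWithinAt

theorem continuousOn_bihariSolution_rpow (hc : 0 < c) (hK : 0 ≤ K) (hα : 0 < α) (p : ℝ) :
    ContinuousOn (fun s => bihariSolution c K α s ^ p) (Ici 0) :=
  (continuousOn_bihariSolution hc hK hα).rpow_const fun _ hs =>
    Or.inl (rpow_pos_of_pos (bihariSolution_base_pos hc hK hα hs) _).ne'

theorem bihariSolution_eq_add_integral (hc : 0 < c) (hK : 0 ≤ K) (hα : 0 < α) (ht : 0 ≤ t) :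
    bihariSolution c K α t = c + K * ∫ s in 0..t, bihariSolution c K α s ^ (1 - α) := by
  have hsub : uIcc 0 t ⊆ Ici 0 := by simp [uIcc_of_le ht, Icc_subset_Ici_self]
  rw [← intervalIntegral.integral_const_mul, integral_eq_sub_of_hasDerivAt (fun _ hs =>
      hasDerivAt_bihariSolution hα.ne' (bihariSolution_base_pos hc hK hα (hsub hs)))
      (((continuousOn_bihariSolution_rpow hc hK hα _).mono hsub).const_smul K).intervalIntegrable,
    bihariSolution_zero hc.le hα.ne']
  ring

theorem continuous_bihariSolution_initial (hα : 0 < α) :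
    Continuous fun c => bihariSolution c K α t :=
  ((continuous_rpow_const hα.le).add continuous_const).rpow_const fun _ =>
    Or.inr (by positivity)

end bihariSolution

theorem lt_bihariSolution_of_le_add_integral {u : ℝ → ℝ} {a c K α T : ℝ} (hK : 0 ≤ K)
    (hα : α ∈ Ioo 0 1) (hT : 0 ≤ T) (hu₀ : ∀ t ∈ Icc 0 T, 0 ≤ u t)
    (hint : IntervalIntegrable (fun s => u s ^ (1 - α)) volume 0 T)
    (hu : ∀ t ∈ Icc 0 T, u t ≤ a + K * ∫ s in 0..t, u s ^ (1 - α)) (hc : 0 < c) (hac : a < c) :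
    u T < bihariSolution c K α T := by
  have hsub : Icc 0 T ⊆ Ici 0 := Icc_subset_Ici_self
  refine lt_of_le_add_integral_of_eq_add_integral hK hT
    (monotoneOn_rpow_Ici_of_exponent_nonneg (sub_nonneg.2 hα.2.le)) hu₀ hint ?_
    ((continuousOn_bihariSolution hc hK hα.1).mono hsub) ?_ (fun t ht => ?_) hu
  · exact ((continuousOn_bihariSolution_rpow hc hK hα.1 _).mono
      (by rwa [uIcc_of_le hT])).intervalIntegrable
  · rwa [bihariSolution_zero hc.le hα.1.ne']
  · rw [bihariSolution_zero hc.le hα.1.ne']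
    exact bihariSolution_eq_add_integral hc hK hα.1 ht.1

theorem stmt_3_general (f : ℝ → ℝ) (hpos : ∀ t, 0 ≤ f t)
    (K : ℝ) (hK : 0 ≤ K) (α : ℝ) (hα : α ∈ Set.Ioo (0 : ℝ) 1)
    (hint : ∀ t : ℝ, 0 ≤ t → IntervalIntegrable (fun s => f s ^ (1 - α)) volume 0 t)
    (hle : ∀ t : ℝ, 0 ≤ t → f t ≤ f 0 + K * ∫ s in (0:ℝ)..t, f s ^ (1 - α)) :
    ∀ t : ℝ, 0 ≤ t → f t ≤ (f 0 ^ α + α * K * t) ^ (1 / α) := by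
  intro t ht
  have h_lt : ∀ e > 0, f t < bihariSolution (f 0 + e) K α t := fun e he =>
    lt_bihariSolution_of_le_add_integral hK hα ht (fun s _ => hpos s) (hint t ht)
      (fun s hs => hle s hs.1) (by linarith [hpos 0]) (by linarith)
  have h_tendsto : Tendsto (fun e => bihariSolution (f 0 + e) K α t) (𝓝[>] 0)
      (𝓝 (bihariSolution (f 0) K α t)) := by
    have h := (continuous_bihariSolution_initial (K := K) (t := t) hα.1).comp
      (continuous_const_add (f 0)) |>.tendsto 0
    simpa [Function.comp_def] using h.mono_left nhdsWithin_le_nhds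
  show f t ≤ bihariSolution (f 0) K α t
  exact ge_of_tendsto h_tendsto (eventually_nhdsWithin_of_forall fun e he => (h_lt e he).le)

theorem stmt_3 (f : ℝ → ℝ) (hf : Measurable f) (hpos : ∀ t, 0 ≤ f t)
    (K : ℝ) (hK : 0 ≤ K) (α : ℝ) (hα : α ∈ Set.Ioo (0 : ℝ) 1)
    (hint : ∀ t : ℝ, 0 ≤ t → IntervalIntegrable (fun s => f s ^ (1 - α)) volume 0 t)
    (hle : ∀ t : ℝ, 0 ≤ t → f t ≤ f 0 + K * ∫ s in (0:ℝ)..t, f s ^ (1 - α)) :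
    ∀ t : ℝ, 0 ≤ t → f t ≤ (f 0 ^ α + α * K * t) ^ (1 / α) :=
  stmt_3_general f hpos K hK α hα hint hle
end

section
/- Under the hypotheses of the Bihari–LaSalle lemma (f measurable nonnegative, f(t) ≤ f(0) + K∫₀ᵗ f(s)^{1-α} ds, α ∈ (0,1), K ≥ 0), one further has f(t) ≤ 2^{1/α - 1} f(0) + (1/2)(2αK)^{1/α} t^{1/α} for all t ≥ 0. -/
/-!
Compare `f` with the explicit solutions `s ↦ (c + α K s) ^ (1 / α)` of `y' = K y ^ (1 - α)`,
`c > f 0 ^ α`: at the first time `s` where such a solution fails to dominate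
`f 0 + K ∫₀ˢ f ^ (1 - α)`, the integral inequality and monotonicity of `y ↦ y ^ (1 - α)` on
`[0, s]` give strict domination, a contradiction. Letting `c ↓ f 0 ^ α` yields the
Bihari–LaSalle bound `f t ≤ (f 0 ^ α + α K t) ^ (1 / α)`, and the power-mean inequality
`(x + y) ^ p ≤ 2 ^ (p - 1) (x ^ p + y ^ p)` splits it into the two terms of the claim.
-/

open Real MeasureTheory intervalIntegral Set

theorem Real.add_rpow_le_two_rpow_sub_one_mul {x y p : ℝ} (hx : 0 ≤ x) (hy : 0 ≤ y)
    (hp : 1 ≤ p) : (x + y) ^ p ≤ 2 ^ (p - 1) * (x ^ p + y ^ p) := by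
  lift x to NNReal using hx
  lift y to NNReal using hy
  exact_mod_cast NNReal.rpow_add_le_mul_rpow_add_rpow x y hp

theorem lt_of_le_add_integral_of_add_integral_le {F f g : ℝ → ℝ} {a b t : ℝ} (ht : 0 ≤ t)
    (hab : a < b) (hF : MonotoneOn F (Ici 0)) (hf_nonneg : ∀ s ∈ Icc 0 t, 0 ≤ f s)
    (hFf : IntervalIntegrable (fun s => F (f s)) volume 0 t)
    (hFg : IntervalIntegrable (fun s => F (g s)) volume 0 t) (hg : ContinuousOn g (Icc 0 t))
    (hf : ∀ s ∈ Icc 0 t, f s ≤ a + ∫ x in 0..s, F (f x))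
    (hg_super : ∀ s ∈ Icc 0 t, b + ∫ x in 0..s, F (g x) ≤ g s) :
    f t < g t := by
  set h : ℝ → ℝ := fun s => a + ∫ x in 0..s, F (f x)
  have hh : ContinuousOn h (Icc 0 t) := by
    have := continuousOn_primitive_interval' hFf left_mem_uIcc
    rw [uIcc_of_le ht] at this
    exact continuousOn_const.add this
  suffices ∀ s ∈ Icc 0 t, h s < g s from
    (hf t ⟨ht, le_rfl⟩).trans_lt (this t ⟨ht, le_rfl⟩)
  by_contra! hbad
  set S := {s ∈ Icc 0 t | g s ≤ h s}
  have hS_bdd : BddBelow S := ⟨0, fun s hs => hs.1.1⟩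
  obtain ⟨⟨hT0, hTt⟩, hgT⟩ : sInf S ∈ S :=
    (isClosed_Icc.isClosed_le hg hh).csInf_mem hbad hS_bdd
  set T := sInf S
  have hT_sub : uIcc 0 T ⊆ uIcc 0 t := by
    rw [uIcc_of_le hT0, uIcc_of_le ht]; exact Icc_subset_Icc_right hTt
  have hFfg : ∫ x in 0..T, F (f x) ≤ ∫ x in 0..T, F (g x) := by
    refine integral_mono_on_of_le_Ioo hT0 (hFf.mono_set hT_sub) (hFg.mono_set hT_sub) ?_
    intro x ⟨hx0, hxT⟩
    have hx : x ∈ Icc 0 t := ⟨hx0.le, hxT.le.trans hTt⟩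
    have hfg : f x < g x := by
      refine (hf x hx).trans_lt (not_le.1 fun hgh => ?_)
      exact hxT.not_ge (csInf_le hS_bdd ⟨hx, hgh⟩)
    exact hF (hf_nonneg x hx) ((hf_nonneg x hx).trans hfg.le) hfg.le
  have := hg_super T ⟨hT0, hTt⟩
  change g T ≤ a + _ at hgT
  linarith

noncomputable def bihariBound (c α K s : ℝ) : ℝ := (c + α * K * s) ^ (1 / α)

theorem bihariBound_zero (c α K : ℝ) : bihariBound c α K 0 = c ^ (1 / α) := by
  simp [bihariBound]

theorem continuous_bihariBound {α : ℝ} (hα : 0 < α) (c K : ℝ) :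
    Continuous (bihariBound c α K) :=
  (continuous_const.add (continuous_const.mul continuous_id)).rpow_const
    fun _ => Or.inr (by positivity)

theorem hasDerivAt_bihariBound {c α K s : ℝ} (hα : α ≠ 0) (hs : 0 < c + α * K * s) :
    HasDerivAt (bihariBound c α K) (K * bihariBound c α K s ^ (1 - α)) s := by
  have hlin : HasDerivAt (fun y => c + α * K * y) (α * K) s := by
    simpa using ((hasDerivAt_id s).const_mul (α * K)).const_add c
  unfold bihariBound
  convert hlin.rpow_const (p := 1 / α) (Or.inl hs.ne') using 1
  rw [← rpow_mul hs.le]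
  field_simp

theorem bihariBound_eq_add_integral {c α K t : ℝ} (hc : 0 < c) (hα : 0 < α) (hK : 0 ≤ K)
    (ht : 0 ≤ t) :
    bihariBound c α K t = c ^ (1 / α) + ∫ s in 0..t, K * bihariBound c α K s ^ (1 - α) := by
  have hpos : ∀ s ∈ uIcc 0 t, 0 < c + α * K * s := by
    rw [uIcc_of_le ht]
    exact fun s hs => by have := hs.1; positivity
  have hcont : ContinuousOn (fun s => K * bihariBound c α K s ^ (1 - α)) (uIcc 0 t) :=
    continuousOn_const.mul ((continuous_bihariBound hα c K).continuousOn.rpow_const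
      fun s hs => Or.inl (rpow_pos_of_pos (hpos s hs) _).ne')
  rw [integral_eq_sub_of_hasDerivAt (fun s hs => hasDerivAt_bihariBound hα.ne' (hpos s hs))
    hcont.intervalIntegrable, bihariBound_zero]
  ring

theorem le_bihariBound {f : ℝ → ℝ} {K α t : ℝ} (hpos : ∀ t, 0 ≤ f t) (hK : 0 ≤ K)
    (hα₀ : 0 < α) (hα₁ : α ≤ 1)
    (hint : ∀ t : ℝ, 0 ≤ t → IntervalIntegrable (fun s => f s ^ (1 - α)) volume 0 t)
    (hle : ∀ t : ℝ, 0 ≤ t → f t ≤ f 0 + K * ∫ s in (0:ℝ)..t, f s ^ (1 - α)) (ht : 0 ≤ t) :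
    f t ≤ bihariBound (f 0 ^ α) α K t := by
  have h1α : 0 ≤ 1 - α := by linarith
  have hf0 : 0 ≤ f 0 ^ α := rpow_nonneg (hpos 0) α
  have hlt : ∀ c > f 0 ^ α, f t < bihariBound c α K t := by
    intro c hc
    have hc₀ : 0 < c := hf0.trans_lt hc
    have hg := continuous_bihariBound hα₀ c K
    have hFg : Continuous fun s => K * bihariBound c α K s ^ (1 - α) :=
      continuous_const.mul (hg.rpow_const fun _ => Or.inr h1α)
    refine lt_of_le_add_integral_of_add_integral_le (F := fun y => K * y ^ (1 - α))
      (a := f 0) (b := c ^ (1 / α)) ht ?_ ?_ (fun s _ => hpos s) ((hint t ht).const_mul K)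
      (hFg.intervalIntegrable _ _) hg.continuousOn ?_ ?_
    · simpa [one_div, rpow_rpow_inv (hpos 0) hα₀.ne'] using
        rpow_lt_rpow hf0 hc (one_div_pos.2 hα₀)
    · exact fun x hx y _ hxy => mul_le_mul_of_nonneg_left (rpow_le_rpow hx hxy h1α) hK
    · intro s hs
      rw [intervalIntegral.integral_const_mul]
      exact hle s hs.1
    · exact fun s hs => (bihariBound_eq_add_integral hc₀ hα₀ hK hs.1).ge
  have hcont : ContinuousWithinAt (fun c => bihariBound c α K t) (Ioi (f 0 ^ α)) (f 0 ^ α) :=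
    ((continuous_id.add continuous_const).rpow_const
      fun _ => Or.inr (one_div_pos.2 hα₀).le).continuousWithinAt
  exact ge_of_tendsto hcont (eventually_nhdsWithin_of_forall fun c hc => (hlt c hc).le)

theorem stmt_4_general (f : ℝ → ℝ) (hpos : ∀ t, 0 ≤ f t)
    (K : ℝ) (hK : 0 ≤ K) (α : ℝ) (hα : α ∈ Set.Ioo (0 : ℝ) 1)
    (hint : ∀ t : ℝ, 0 ≤ t → IntervalIntegrable (fun s => f s ^ (1 - α)) volume 0 t)
    (hle : ∀ t : ℝ, 0 ≤ t → f t ≤ f 0 + K * ∫ s in (0:ℝ)..t, f s ^ (1 - α)) :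
    ∀ t : ℝ, 0 ≤ t →
      f t ≤ 2 ^ (1 / α - 1) * f 0 + (2 * α * K) ^ (1 / α) / 2 * t ^ (1 / α) := by
  intro t ht
  obtain ⟨hα₀, hα₁⟩ := hα
  have hp : 1 ≤ 1 / α := by rw [le_div_iff₀ hα₀]; linarith
  calc f t ≤ (f 0 ^ α + α * K * t) ^ (1 / α) :=
        le_bihariBound hpos hK hα₀ hα₁.le hint hle ht
    _ ≤ 2 ^ (1 / α - 1) * ((f 0 ^ α) ^ (1 / α) + (α * K * t) ^ (1 / α)) :=
        add_rpow_le_two_rpow_sub_one_mul (rpow_nonneg (hpos 0) α) (by positivity) hp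
    _ = 2 ^ (1 / α - 1) * f 0 + (2 * α * K) ^ (1 / α) / 2 * t ^ (1 / α) := by
        rw [one_div, rpow_rpow_inv (hpos 0) hα₀.ne', mul_assoc 2, mul_rpow (by positivity) ht,
          mul_rpow zero_le_two (by positivity), rpow_sub_one two_ne_zero]
        ring

theorem stmt_4 (f : ℝ → ℝ) (hf : Measurable f) (hpos : ∀ t, 0 ≤ f t)
    (K : ℝ) (hK : 0 ≤ K) (α : ℝ) (hα : α ∈ Set.Ioo (0 : ℝ) 1)
    (hint : ∀ t : ℝ, 0 ≤ t → IntervalIntegrable (fun s => f s ^ (1 - α)) volume 0 t)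
    (hle : ∀ t : ℝ, 0 ≤ t → f t ≤ f 0 + K * ∫ s in (0:ℝ)..t, f s ^ (1 - α)) :
    ∀ t : ℝ, 0 ≤ t →
      f t ≤ 2 ^ (1 / α - 1) * f 0 + (2 * α * K) ^ (1 / α) / 2 * t ^ (1 / α) :=
  stmt_4_general f hpos K hK α hα hint hle
end

section
/- For all real p ≥ 2 and all x, y ≥ 0, (x + y)^p ≤ x^p + y^p + Σ_{l=1}^{k_p} C(p,l) (x^l y^{p-l} + x^{p-l} y^l), where k_p = ⌊(p+1)/2⌋ and C(p,l) = p(p−1)···(p−l+1)/l! denotes the generalized binomial coefficient. -/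
open Real Finset

/-- Generalized binomial coefficient `C(p,l) = p(p-1)⋯(p-l+1)/l!` for real `p`. -/
noncomputable def genBinom (p : ℝ) (l : ℕ) : ℝ :=
  (∏ i ∈ Finset.range l, (p - i)) / (Nat.factorial l)

/-!
Dividing by `x ^ p` for `y ≤ x` reduces the inequality to `0 ≤ t = y / x ≤ 1`. With `n = ⌊p⌋`,
the binomial series of `(1 + t) ^ p` truncated after degree `n + 1` dominates `(1 + t) ^ p`
(its remainder carries the factor `p - n - 1 ≤ 0`). Each term of degree `l > k_p` of the
truncation is absorbed by its mirror image `m = n + 1 - l`: `C(p, l) ≤ C(p, m)` because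
`n ≤ p ≤ n + 1`, and `t ^ l ≤ t ^ (p - m)` because `t ≤ 1`.
-/

theorem genBinom_zero (p : ℝ) : genBinom p 0 = 1 := by simp [genBinom]

theorem genBinom_eq_prod (p : ℝ) (l : ℕ) :
    genBinom p l = ∏ i ∈ range l, (p - i) / (i + 1) := by
  rw [genBinom, prod_div_distrib, ← prod_range_add_one_eq_factorial]
  push_cast
  rfl

theorem succ_mul_genBinom_succ (q : ℝ) (j : ℕ) :
    (j + 1) * genBinom q (j + 1) = q * genBinom (q - 1) j := by
  have hnum : ∏ i ∈ range (j + 1), (q - i) = (∏ i ∈ range j, (q - 1 - i)) * q := by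
    rw [prod_range_succ']
    push_cast
    rw [sub_zero]
    exact congrArg (· * q) (prod_congr rfl fun i _ => by ring)
  rw [genBinom, genBinom, hnum, Nat.factorial_succ]
  push_cast
  field_simp

theorem genBinom_nonneg {p : ℝ} {l : ℕ} (hl : (l : ℝ) ≤ p + 1) : 0 ≤ genBinom p l := by
  rw [genBinom_eq_prod]
  refine prod_nonneg fun i hi => div_nonneg ?_ (by positivity)
  have : (i : ℝ) + 1 ≤ l := by exact_mod_cast mem_range.mp hi
  linarith

theorem prod_Ico_sub_le_prod_Ico_add_one {p : ℝ} {n m l : ℕ} (hml : m + l = n + 1)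
    (hpn : p ≤ n + 1) (hlp : (l : ℝ) ≤ p + 1) :
    ∏ i ∈ Ico m l, (p - i) ≤ ∏ i ∈ Ico m l, ((i : ℝ) + 1) := by
  calc ∏ i ∈ Ico m l, (p - i) ≤ ∏ i ∈ Ico m l, (((n - i : ℕ) : ℝ) + 1) := by
        refine prod_le_prod (fun i hi => ?_) (fun i hi => ?_)
        · have : (i : ℝ) + 1 ≤ l := by exact_mod_cast (mem_Ico.mp hi).2
          linarith
        · have hin : i ≤ n := by have := (mem_Ico.mp hi).2; omega
          rw [Nat.cast_sub hin]
          linarith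
    _ = ∏ i ∈ Ico m l, ((i : ℝ) + 1) := by
        rw [prod_Ico_reflect (fun j => (j : ℝ) + 1) m (by omega : l ≤ n + 1)]
        rw [show n + 1 - l = m by omega, show n + 1 - m = l by omega]

theorem genBinom_le_genBinom_of_add_eq {p : ℝ} {n m l : ℕ} (hml : m + l = n + 1) (hm : m ≤ l)
    (hpn : p ≤ n + 1) (hlp : (l : ℝ) ≤ p + 1) : genBinom p l ≤ genBinom p m := by
  have hsplit : genBinom p l = genBinom p m * ∏ i ∈ Ico m l, (p - i) / (i + 1) := by
    simp only [genBinom_eq_prod, prod_range_mul_prod_Ico _ hm]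
  have hratio : ∏ i ∈ Ico m l, (p - i) / (i + 1) ≤ 1 := by
    rw [prod_div_distrib]
    exact div_le_one_of_le₀ (prod_Ico_sub_le_prod_Ico_add_one hml hpn hlp)
      (prod_nonneg fun i _ => by positivity)
  have hmp : (m : ℝ) ≤ p + 1 := le_trans (by exact_mod_cast hm) hlp
  rw [hsplit]
  exact mul_le_of_le_one_right (genBinom_nonneg hmp) hratio

theorem hasDerivAt_sum_genBinom_mul_pow (q : ℝ) (N : ℕ) (s : ℝ) :
    HasDerivAt (fun s => ∑ l ∈ range (N + 1), genBinom q l * s ^ l)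
      (q * ∑ l ∈ range N, genBinom (q - 1) l * s ^ l) s := by
  refine (HasDerivAt.fun_sum fun l _ =>
    (hasDerivAt_pow l s).const_mul (genBinom q l)).congr_deriv ?_
  rw [sum_range_succ', mul_sum]
  simp only [Nat.cast_zero, zero_mul, mul_zero, add_zero, Nat.add_sub_cancel, Nat.cast_succ]
  refine sum_congr rfl fun j _ => ?_
  linear_combination s ^ j * succ_mul_genBinom_succ q j

-- The difference `∑ - (1 + s) ^ q` vanishes at `0`, and its derivative is `q` times the
-- corresponding difference for `(q - 1, N - 1)`, which is nonnegative by induction.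
theorem one_add_rpow_le_sum_genBinom (N : ℕ) {q : ℝ} (hq₁ : N - 1 ≤ q) (hq₂ : q ≤ N) {t : ℝ}
    (ht : 0 ≤ t) : (1 + t) ^ q ≤ ∑ l ∈ range (N + 1), genBinom q l * t ^ l := by
  induction N generalizing q t with
  | zero =>
    simpa [genBinom_zero] using rpow_le_one_of_one_le_of_nonpos (by linarith) (by simpa using hq₂)
  | succ N ih =>
    push_cast at hq₁ hq₂
    have hq : 0 ≤ q := le_trans N.cast_nonneg (by linarith)
    set F : ℝ → ℝ := fun s => ∑ l ∈ range (N + 2), genBinom q l * s ^ l - (1 + s) ^ q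
    set F' : ℝ → ℝ := fun s =>
      q * (∑ l ∈ range (N + 1), genBinom (q - 1) l * s ^ l - (1 + s) ^ (q - 1))
    have hF : ∀ s ∈ Set.Ici 0, HasDerivAt F (F' s) s := fun s hs =>
      ((hasDerivAt_sum_genBinom_mul_pow q (N + 1) s).fun_sub
        (((hasDerivAt_id s).const_add 1).rpow_const (p := q)
          (Or.inl (by simp only [id]; linarith [Set.mem_Ici.mp hs])))).congr_deriv
        (by simp only [F', id]; ring)
    have hmono : MonotoneOn F (Set.Ici 0) := by
      refine monotoneOn_of_hasDerivWithinAt_nonneg (convex_Ici 0) (f' := F') (HasDerivAt.continuousOn hF)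
        (fun s hs => ?_) (fun s hs => ?_)
      all_goals rw [interior_Ici] at hs
      · exact (hF s (Set.mem_Ici.mpr (le_of_lt hs))).hasDerivWithinAt
      · exact mul_nonneg hq (sub_nonneg.mpr (ih (by linarith) (by linarith) (le_of_lt hs)))
    have hF0 : F 0 = 0 := by simp [F, sum_range_succ', genBinom_zero]
    have := hmono Set.self_mem_Ici ht ht
    rw [hF0] at this
    exact sub_nonneg.mp this

theorem sum_range_succ_eq_add_sum_Icc {M : Type*} [AddCommMonoid M] (f : ℕ → M) (k : ℕ) :
    ∑ l ∈ range (k + 1), f l = f 0 + ∑ l ∈ Icc 1 k, f l := by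
  rw [Nat.range_succ_eq_Icc_zero, ← insert_Icc_add_one_left_eq_Icc k.zero_le,
    sum_insert (by simp), zero_add]

theorem genBinom_mul_pow_le_genBinom_mul_rpow {p t : ℝ} {n m l : ℕ} (hml : m + l = n + 1)
    (hm : m ≤ l) (hn : n ≤ p) (hpn : p ≤ n + 1) (ht₀ : 0 ≤ t) (ht₁ : t ≤ 1) :
    genBinom p l * t ^ l ≤ genBinom p m * t ^ (p - m) := by
  have hml' : (m : ℝ) + l = n + 1 := by exact_mod_cast hml
  have hmn : (m : ℝ) ≤ n := by exact_mod_cast (by omega : m ≤ n)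
  have hlp : (l : ℝ) ≤ p + 1 := by linarith
  refine mul_le_mul (genBinom_le_genBinom_of_add_eq hml hm hpn hlp) ?_ (by positivity)
    (genBinom_nonneg (by linarith))
  rw [← rpow_natCast]
  exact rpow_le_rpow_of_exponent_ge' ht₀ ht₁ (by linarith) (by linarith)

theorem sum_Ico_genBinom_mul_pow_le {p t : ℝ} {n k : ℕ} (hn : n ≤ p) (hpn : p ≤ n + 1)
    (hkn : k ≤ n + 1) (hnk : n ≤ 2 * k) (ht₀ : 0 ≤ t) (ht₁ : t ≤ 1) :
    ∑ l ∈ Ico (k + 1) (n + 2), genBinom p l * t ^ l ≤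
      ∑ m ∈ range (k + 1), genBinom p m * t ^ (p - m) := by
  have hreflect : ∑ l ∈ Ico (k + 1) (n + 2), genBinom p l * t ^ l =
      ∑ m ∈ range (n + 1 - k), genBinom p (n + 1 - m) * t ^ (n + 1 - m) := by
    rw [range_eq_Ico, sum_Ico_reflect (fun l => genBinom p l * t ^ l) 0 (by omega),
      show n + 1 + 1 - (n + 1 - k) = k + 1 by omega, Nat.sub_zero]
  rw [hreflect]
  calc ∑ m ∈ range (n + 1 - k), genBinom p (n + 1 - m) * t ^ (n + 1 - m)
      ≤ ∑ m ∈ range (n + 1 - k), genBinom p m * t ^ (p - m) :=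
        sum_le_sum fun m hm => genBinom_mul_pow_le_genBinom_mul_rpow
          (by have := mem_range.mp hm; omega) (by have := mem_range.mp hm; omega) hn hpn ht₀ ht₁
    _ ≤ ∑ m ∈ range (k + 1), genBinom p m * t ^ (p - m) := by
        refine sum_le_sum_of_subset_of_nonneg (range_subset_range.mpr (by omega)) fun m hm _ => ?_
        have : (m : ℝ) ≤ n + 1 := by exact_mod_cast (mem_range_succ_iff.mp hm).trans hkn
        have := genBinom_nonneg (p := p) (l := m) (by linarith)
        positivity

theorem one_add_rpow_le {p : ℝ} (hp : 0 ≤ p) {t : ℝ} (ht₀ : 0 ≤ t) (ht₁ : t ≤ 1) :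
    (1 + t) ^ p ≤ 1 + t ^ p +
      ∑ l ∈ Icc 1 ⌊(p + 1) / 2⌋₊, genBinom p l * (t ^ (l : ℝ) + t ^ (p - l)) := by
  set n := ⌊p⌋₊
  set k := ⌊(p + 1) / 2⌋₊
  have hn : (n : ℝ) ≤ p := Nat.floor_le hp
  have hpn : p < n + 1 := Nat.lt_floor_add_one p
  have hkp : (k : ℝ) ≤ (p + 1) / 2 := Nat.floor_le (by linarith)
  have hnk : n ≤ 2 * k := by
    have : (p + 1) / 2 < k + 1 := Nat.lt_floor_add_one _
    have : (n : ℝ) < 2 * k + 1 := by linarith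
    exact_mod_cast Nat.lt_add_one_iff.mp (by exact_mod_cast this)
  have hkn : k ≤ n + 1 := by
    have : (k : ℝ) ≤ n + 1 := by linarith
    exact_mod_cast this
  calc (1 + t) ^ p ≤ ∑ l ∈ range (n + 2), genBinom p l * t ^ l :=
        one_add_rpow_le_sum_genBinom (n + 1) (by push_cast; linarith) (by push_cast; linarith) ht₀
    _ = ∑ l ∈ range (k + 1), genBinom p l * t ^ l +
          ∑ l ∈ Ico (k + 1) (n + 2), genBinom p l * t ^ l :=
        (sum_range_add_sum_Ico _ (by omega)).symm
    _ ≤ ∑ l ∈ range (k + 1), genBinom p l * t ^ l +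
          ∑ m ∈ range (k + 1), genBinom p m * t ^ (p - m) := by
        gcongr
        exact sum_Ico_genBinom_mul_pow_le hn hpn.le hkn hnk ht₀ ht₁
    _ = _ := by
        rw [sum_range_succ_eq_add_sum_Icc, sum_range_succ_eq_add_sum_Icc]
        simp only [genBinom_zero, mul_add, sum_add_distrib, rpow_natCast, pow_zero,
          Nat.cast_zero, sub_zero, one_mul]
        ring

theorem add_rpow_le_of_le {p : ℝ} (hp : 0 ≤ p) {x y : ℝ} (hy : 0 ≤ y) (hyx : y ≤ x) :
    (x + y) ^ p ≤ x ^ p + y ^ p +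
      ∑ l ∈ Icc 1 ⌊(p + 1) / 2⌋₊,
        genBinom p l * (x ^ (l : ℝ) * y ^ (p - l) + x ^ (p - l) * y ^ (l : ℝ)) := by
  rcases (hy.trans hyx).eq_or_lt with rfl | hx
  · obtain rfl : y = 0 := le_antisymm hyx hy
    have hsum : 0 ≤ ∑ l ∈ Icc 1 ⌊(p + 1) / 2⌋₊,
        genBinom p l * ((0 : ℝ) ^ (l : ℝ) * 0 ^ (p - l) + 0 ^ (p - l) * 0 ^ (l : ℝ)) := by
      refine sum_nonneg fun l hl => mul_nonneg (genBinom_nonneg ?_) (by positivity)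
      have : (l : ℝ) ≤ (p + 1) / 2 := (Nat.le_floor_iff (by linarith)).mp (mem_Icc.mp hl).2
      linarith
    have : (0 : ℝ) ≤ 0 ^ p := rpow_nonneg le_rfl p
    rw [add_zero]
    linarith
  have hscale : ∀ c : ℝ, x ^ p * (y / x) ^ c = x ^ (p - c) * y ^ c := fun c => by
    rw [div_rpow hy hx.le, rpow_sub hx]
    field_simp
  calc (x + y) ^ p = x ^ p * (1 + y / x) ^ p := by
        rw [← mul_rpow hx.le (by positivity), mul_one_add, mul_div_cancel₀ y hx.ne']
    _ ≤ x ^ p * (1 + (y / x) ^ p +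
          ∑ l ∈ Icc 1 ⌊(p + 1) / 2⌋₊, genBinom p l * ((y / x) ^ (l : ℝ) + (y / x) ^ (p - l))) :=
        mul_le_mul_of_nonneg_left
          (one_add_rpow_le hp (div_nonneg hy hx.le) ((div_le_one hx).mpr hyx)) (by positivity)
    _ = _ := by
        simp only [mul_add, mul_sum, mul_left_comm (x ^ p), hscale, sub_self, rpow_zero,
          sub_sub_cancel, mul_one, one_mul, add_comm (genBinom p _ * (x ^ (p - _) * _))]

theorem stmt_8 (p : ℝ) (hp : 2 ≤ p) (x y : ℝ) (hx : 0 ≤ x) (hy : 0 ≤ y) :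
    (x + y) ^ p ≤ x ^ p + y ^ p +
      ∑ l ∈ Finset.Icc 1 (⌊(p + 1) / 2⌋₊),
        genBinom p l * (x ^ (l : ℝ) * y ^ (p - l) + x ^ (p - l) * y ^ (l : ℝ)) := by
  rcases le_total y x with hyx | hxy
  · exact add_rpow_le_of_le (by linarith) hy hyx
  · have hswap := add_rpow_le_of_le (p := p) (by linarith) hx hxy
    rw [add_comm y, add_comm (y ^ p)] at hswap
    convert hswap using 3 with l
    ring
end
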